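/- Let $k$ be a field of characteristic $\neq 2$, $n \geq 1$, $G = (\mathbb{Z}/2)^n$, and let $M$ be a $k[G]$-module. Let $\epsilon_1, \ldots, \epsilon_N$ ($N = 2^n - 1$) be the idempotents $\epsilon_S = 2^{-(n-1)}\sum_{h\in H_S} h$ indexed by the nonempty subsets $S$, and suppose $\epsilon_G \cdot x = 0$ for all $x \in M$, where $\epsilon_G = 2^{-n}\sum_{g\in G} g$. Then the map $\gamma: \bigoplus_{S} \epsilon_S M \to M$, $\gamma(x_1,\ldots,x_N) = \sum_i x_i$, is an isomorphism of $k$-vector spaces, with inverse $\psi(y) = (\epsilon_1 y, \ldots, \epsilon_N y)$. -/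

import Mathlib

open scoped BigOperators

/-- The idempotent `ε_S = 2^{-(n-1)} ∑_{h ∈ H_S} h` in the group ring `k[(ℤ/2)ⁿ]`. -/
noncomputable def epsS (k : Type*) [Field k] (n : ℕ) (S : Finset (Fin n)) :
    AddMonoidAlgebra k (Fin n → ZMod 2) :=
  (2 ^ (n - 1) : k)⁻¹ •
    ∑ h ∈ Finset.univ.filter (fun a : Fin n → ZMod 2 => ∑ i ∈ S, a i = 0),
      AddMonoidAlgebra.single h (1 : k)

/-- The idempotent `ε_G = 2^{-n} ∑_{g ∈ G} g` in the group ring `k[(ℤ/2)ⁿ]`. -/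
noncomputable def epsG (k : Type*) [Field k] (n : ℕ) :
    AddMonoidAlgebra k (Fin n → ZMod 2) :=
  (2 ^ n : k)⁻¹ • ∑ g : Fin n → ZMod 2, AddMonoidAlgebra.single g (1 : k)


/-!
Write `σ_X = ∑_{x ∈ X} x` in `k[G]`, so that `ε_S = 2^{-(n-1)} σ_{H_S}` where `H_S` is the kernel
of `χ_S : a ↦ ∑_{i ∈ S} a_i`. For nonempty `S ≠ T` the map `(χ_S, χ_T) : G → (ℤ/2)²` is onto, so
every `g` is a sum `a + b` with `a ∈ H_S`, `b ∈ H_T` in exactly `2^{n-2}` ways; hence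
`σ_{H_S} σ_{H_T} = 2^{n-2} σ_G` and `ε_S ε_T = ε_G`. A nonzero `g` lies in `H_S` for exactly half
of all `S` (toggling an index `i` with `g_i = 1` flips the condition), which gives
`∑_{S ≠ ∅} ε_S = 1 + (2^n - 2) ε_G`. Once `ε_G` acts by zero, the second identity says
`γ ∘ ψ = id` and the first that `ψ ∘ γ = id`.
-/

open Finset Function AddMonoidAlgebra

section FiberCount

variable {A B F : Type*} [AddGroup A] [Fintype A] [AddMonoid B] [Fintype B] [DecidableEq B]
  [FunLike F A B] [AddMonoidHomClass F A B]

theorem card_fiber_mul_card_of_surjective (f : F) (hf : Surjective f) (b : B) :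
    #{a | f a = b} * Fintype.card B = Fintype.card A := by
  calc #{a | f a = b} * Fintype.card B = ∑ b' : B, #{a | f a = b'} := by
        rw [sum_congr rfl fun b' _ => AddMonoidHom.card_fiber_eq_of_mem_range f (hf b') (hf b),
          sum_const, card_univ, smul_eq_mul, mul_comm]
    _ = Fintype.card A := (card_eq_sum_card_fiberwise fun a _ => mem_univ (f a)).symm

end FiberCount

theorem card_filter_mul_two_of_involutive {X : Type*} [Fintype X] (p : X → Prop)
    [DecidablePred p] {τ : X → X} (hτ : Involutive τ) (hp : ∀ x, p (τ x) ↔ ¬ p x) :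
    #{x | p x} * 2 = Fintype.card X := by
  have hswap : #{x | p x} = #{x | ¬ p x} :=
    card_nbij' τ τ (fun x _ => by simp_all) (fun x _ => by simp_all) (fun x _ => hτ x)
      (fun x _ => hτ x)
  rw [mul_two]
  nth_rw 2 [hswap]
  exact card_filter_add_card_filter_not _

theorem sum_symmDiff_singleton {ι M : Type*} [DecidableEq ι] [AddCommGroup M] (S : Finset ι)
    (i : ι) (g : ι → M) :
    ∑ j ∈ symmDiff S {i}, g j = if i ∈ S then ∑ j ∈ S, g j - g i else ∑ j ∈ S, g j + g i := by
  split_ifs with h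
  · rw [← sum_erase_eq_sub h]
    congr 1; ext j; by_cases hj : j = i <;> simp [mem_symmDiff, hj, h]
  · rw [add_comm, ← sum_insert h]
    congr 1; ext j; by_cases hj : j = i <;> simp [mem_symmDiff, hj, h]

theorem card_filter_sum_eq_zero_mul_two {ι : Type*} [Fintype ι] [DecidableEq ι] {g : ι → ZMod 2}
    (hg : g ≠ 0) : #{S : Finset ι | ∑ i ∈ S, g i = 0} * 2 = 2 ^ Fintype.card ι := by
  obtain ⟨i₀, hi₀⟩ := Function.ne_iff.mp hg
  rw [← Fintype.card_finset]
  refine card_filter_mul_two_of_involutive _ (τ := fun S => symmDiff S {i₀})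
    (fun S => symmDiff_symmDiff_cancel_right _ _) fun S => ?_
  have toggle : ∀ x y : ZMod 2, y ≠ 0 → (x - y = 0 ↔ ¬ x = 0) ∧ (x + y = 0 ↔ ¬ x = 0) := by
    decide
  rw [sum_symmDiff_singleton]
  split_ifs
  exacts [(toggle _ _ hi₀).1, (toggle _ _ hi₀).2]

section CoordSum

variable (R : Type*) {ι : Type*} [CommRing R]

def coordSum (S : Finset ι) : (ι → R) →ₗ[R] R := ∑ i ∈ S, LinearMap.proj i

variable {R}

@[simp] theorem coordSum_apply (S : Finset ι) (a : ι → R) : coordSum R S a = ∑ i ∈ S, a i := by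
  simp [coordSum]

variable [DecidableEq ι]

theorem coordSum_prod_surjective {S T : Finset ι} {i j : ι} (hiS : i ∈ S) (hiT : i ∉ T)
    (hjT : j ∈ T) : Surjective ((coordSum R S).prod (coordSum R T)) := by
  have coordSum_single (U : Finset ι) (l : ι) :
      coordSum R U (Pi.single l 1) = if l ∈ U then 1 else 0 := by simp
  rintro ⟨a, b⟩
  refine ⟨b • Pi.single j 1 + (a - b * coordSum R S (Pi.single j 1)) • Pi.single i 1, ?_⟩
  simp only [LinearMap.prod_apply, Function.prod, map_add, map_smul, coordSum_single, hiS, hiT,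
    hjT, if_true, if_false, Prod.smul_mk, Prod.mk_add_mk, smul_eq_mul, Prod.mk.injEq]
  constructor <;> ring

theorem coordSum_prod_surjective_of_ne {S T : Finset ι} (hS : S.Nonempty) (hT : T.Nonempty)
    (hST : S ≠ T) : Surjective ((coordSum R S).prod (coordSum R T)) := by
  by_cases hsub : S ⊆ T
  · obtain ⟨i, hiT, hiS⟩ := not_subset.mp fun h => hST (hsub.antisymm h)
    obtain ⟨j, hjS⟩ := hS
    intro y
    obtain ⟨x, hx⟩ := coordSum_prod_surjective hiT hiS hjS y.swap
    exact ⟨x, by simpa using congrArg Prod.swap hx⟩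
  · obtain ⟨i, hiS, hiT⟩ := not_subset.mp hsub
    obtain ⟨j, hjT⟩ := hT
    exact coordSum_prod_surjective hiS hiT hjT

end CoordSum

theorem sum_single_mul_sum_single_of_card_eq {k G : Type*} [CommSemiring k] [AddCommGroup G]
    [Fintype G] [DecidableEq G] (A B : Finset G) {c : ℕ} (hc : ∀ g, #{a ∈ A | g - a ∈ B} = c) :
    (∑ a ∈ A, single a (1 : k)) * ∑ b ∈ B, single b 1 = c • ∑ g, single g (1 : k) := by
  have translate (a : G) :
      ∑ b ∈ B, single (a + b) (1 : k) = ∑ g ∈ {g | g - a ∈ B}, single g 1 :=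
    sum_nbij' (a + ·) (· - a) (by simp) (by simp) (by simp) (by simp) (by simp)
  simp only [sum_mul_sum, single_mul_single, mul_one, translate, sum_filter]
  rw [sum_comm]
  simp only [← sum_filter, sum_const, hc, smul_sum]

theorem epsS_mul_epsS_of_ne (k : Type*) [Field k] (h2 : (2 : k) ≠ 0) {n : ℕ}
    {S T : Finset (Fin n)} (hS : S.Nonempty) (hT : T.Nonempty) (hST : S ≠ T) :
    epsS k n S * epsS k n T = epsG k n := by
  have hcount (g : Fin n → ZMod 2) :
      #{a ∈ {a | ∑ i ∈ S, a i = 0} | g - a ∈ ({a | ∑ i ∈ T, a i = 0} : Finset _)} * 4 =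
        2 ^ n := by
    have hfiber := card_fiber_mul_card_of_surjective _ (coordSum_prod_surjective_of_ne hS hT hST)
      (0, coordSum (ZMod 2) T g)
    simp only [Fintype.card_prod, ZMod.card, Fintype.card_pi, prod_const, card_univ,
      Fintype.card_fin] at hfiber
    rw [filter_filter]
    convert hfiber using 3
    ext a
    simp [sub_eq_zero, eq_comm]
  have hc : ((2 ^ n / 4 : ℕ) : k) * 4 = 2 ^ n := by
    exact_mod_cast congrArg (Nat.cast (R := k)) (Nat.div_mul_cancel (Dvd.intro_left _ (hcount 0)))
  obtain ⟨m, rfl⟩ : ∃ m, n = m + 1 := ⟨n - 1, by have := hS.choose.pos; omega⟩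
  rw [epsS, epsS, epsG, smul_mul_smul_comm,
    sum_single_mul_sum_single_of_card_eq (c := 2 ^ (m + 1) / 4) _ _ fun g =>
      (Nat.div_eq_of_eq_mul_left (by norm_num) (hcount g).symm).symm,
    ← Nat.cast_smul_eq_nsmul k, smul_smul, Nat.add_sub_cancel]
  congr 1
  field_simp
  refine mul_left_cancel₀ (pow_ne_zero 2 h2) ?_
  linear_combination 2 ^ (m + 1) * hc

theorem sum_epsS (k : Type*) [Field k] (h2 : (2 : k) ≠ 0) {n : ℕ} (hn : 1 ≤ n) :
    ∑ S : Finset (Fin n), epsS k n S = 1 + ∑ g, single g (1 : k) := by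
  obtain ⟨m, rfl⟩ : ∃ m, n = m + 1 := ⟨n - 1, by omega⟩
  have hswap : ∑ S : Finset (Fin (m + 1)),
        ∑ h ∈ {a : Fin (m + 1) → ZMod 2 | ∑ i ∈ S, a i = 0}, single h (1 : k) =
      ∑ h : Fin (m + 1) → ZMod 2, #{S : Finset (Fin (m + 1)) | ∑ i ∈ S, h i = 0} •
        single h (1 : k) := by
    simp only [sum_filter]
    rw [sum_comm]
    simp only [← sum_filter, sum_const]
  have hcount (h : Fin (m + 1) → ZMod 2) : #{S : Finset (Fin (m + 1)) | ∑ i ∈ S, h i = 0} =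
      2 ^ m + if h = 0 then 2 ^ m else 0 := by
    split_ifs with hh
    · simp [hh, pow_succ, mul_two]
    · have := card_filter_sum_eq_zero_mul_two hh
      rw [Fintype.card_fin, pow_succ] at this
      omega
  simp only [epsS, ← smul_sum, hswap, hcount, add_smul, ite_smul, zero_smul, sum_add_distrib,
    sum_ite_eq', mem_univ, if_true, ← smul_sum, ← one_def, Nat.add_sub_cancel, smul_add]
  simp only [← Nat.cast_smul_eq_nsmul k, smul_smul, Nat.cast_pow, Nat.cast_ofNat,
    inv_mul_cancel₀ (pow_ne_zero _ h2), one_smul, add_comm]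

theorem sum_nonempty_finset_eq_sub {α M : Type*} [Fintype α] [DecidableEq α] [AddCommGroup M]
    (f : Finset α → M) : ∑ S : {S : Finset α // S.Nonempty}, f S = ∑ S, f S - f ∅ := by
  rw [← sum_erase_eq_sub (mem_univ _), ← sum_subtype _ fun S => ?_]
  simp [nonempty_iff_ne_empty]

theorem sum_epsS_nonempty (k : Type*) [Field k] (h2 : (2 : k) ≠ 0) {n : ℕ} (hn : 1 ≤ n) :
    ∑ S : {S : Finset (Fin n) // S.Nonempty}, epsS k n S = 1 + ((2 : k) ^ n - 2) • epsG k n := by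
  obtain ⟨m, rfl⟩ : ∃ m, n = m + 1 := ⟨n - 1, by omega⟩
  have hcoef : (1 : k) - (2 ^ m)⁻¹ = (2 ^ (m + 1) - 2) * (2 ^ (m + 1))⁻¹ := by
    field_simp
    ring
  have hempty : epsS k (m + 1) ∅ = ((2 : k) ^ m)⁻¹ • ∑ g, single g (1 : k) := by
    simp [epsS]
  rw [sum_nonempty_finset_eq_sub, sum_epsS k h2 hn, hempty, epsG, smul_smul, ← hcoef, sub_smul,
    one_smul]
  abel

/-- if `ε_G` annihilates the `k[G]`-module `M`, then
`γ : ⊕_S ε_S M → M`, `γ(x₁,…,x_N) = ∑ xᵢ`, is bijective with inverse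
`ψ(y) = (ε₁ y, …, ε_N y)`.  Equivalently: `∑_S ε_S • y = y` for all `y`, and for any
tuple `(x_S)` with `x_S ∈ ε_S M` (i.e. `ε_S • x_S = x_S`), applying `ε_S` to the sum
recovers `x_S`. -/
theorem gamma_isomorphism (k : Type*) [Field k] (h2 : (2 : k) ≠ 0)
    (n : ℕ) (hn : 1 ≤ n)
    (M : Type*) [AddCommGroup M] [Module (AddMonoidAlgebra k (Fin n → ZMod 2)) M]
    (hG : ∀ x : M, epsG k n • x = 0) :
    (∀ y : M, ∑ S : {S : Finset (Fin n) // S.Nonempty}, epsS k n S.1 • y = y) ∧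
    (∀ x : {S : Finset (Fin n) // S.Nonempty} → M,
      (∀ S, epsS k n S.1 • x S = x S) →
      ∀ S, epsS k n S.1 • (∑ T : {S : Finset (Fin n) // S.Nonempty}, x T) = x S) := by
  refine ⟨fun y => ?_, fun x hx S => ?_⟩
  · rw [← sum_smul, sum_epsS_nonempty k h2 hn, add_smul, one_smul, Algebra.smul_def, mul_smul,
      hG, smul_zero, add_zero]
  · rw [smul_sum, sum_eq_single_of_mem S (mem_univ S) fun T _ hTS => ?_, hx S]
    have hST : S.1 ≠ T.1 := fun h => hTS (Subtype.ext h.symm)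
    rw [← hx T, smul_smul, epsS_mul_epsS_of_ne k h2 S.2 T.2 hST, hG]
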